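/- Let E be a small regular category with enough regular projectives, and let E_P be its full subcategory of regular projectives. Then the canonical functor E → [E_P^op, Set] (restricted Yoneda) is fully faithful, preserves finite limits and coequalizers of kernel pairs, and factors through the full subcategory 𝖱₁(E_P) of presheaves that are coequalizers of pseudo equivalence relations of representables; in particular every object of E is a coequalizer of a pseudo equivalence relation of projectives. -/

import Mathlib

set_option linter.unusedVariables false

open CategoryTheory CategoryTheory.Limits Opposite

universe w w' v v' u

namespace Paper

/-! ### Weighted (co)limits in the `Set`-enriched case -/

/-- The canonical diagram whose conical colimit computes the `M`-weighted colimit of `H`. -/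
abbrev elemDiagram {C : Type u} [SmallCategory C] (M : Cᵒᵖ ⥤ Type u)
    {A : Type w} [Category.{v} A] (H : C ⥤ A) : M.Elementsᵒᵖ ⥤ A :=
  (CategoryOfElements.π M).leftOp ⋙ H

/-- The `M`-weighted colimit of `H`. -/
noncomputable abbrev wcolim {C : Type u} [SmallCategory C] (M : Cᵒᵖ ⥤ Type u)
    {A : Type w} [Category.{v} A] (H : C ⥤ A) [HasColimit (elemDiagram M H)] : A :=
  colimit (elemDiagram M H)

/-- The functor `M ⋆ (−) : [C, Set] ⥤ Set`. -/
noncomputable def wcolimF {C : Type u} [SmallCategory C] (M : Cᵒᵖ ⥤ Type u) :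
    (C ⥤ Type u) ⥤ Type u :=
  (Functor.whiskeringLeft _ _ _).obj (CategoryOfElements.π M).leftOp ⋙ colim

/-- The functor `(−) ⋆ F : [Bᵒᵖ, Set] ⥤ Set` for a covariant weight `F : B ⥤ Set`. -/
noncomputable def costarF {B : Type u} [SmallCategory B] (F : B ⥤ Type u) :
    (Bᵒᵖ ⥤ Type u) ⥤ Type u :=
  wcolimF (C := Bᵒᵖ) (unopUnop B ⋙ F)

/-! ### Cardinal-indexed smallness, filteredness, flatness, accessibility -/

/-- A small category `D` is `α`-small if it has fewer than `α` arrows. -/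
def AlphaSmall (α : Cardinal.{u}) (D : Type u) [SmallCategory D] : Prop :=
  Cardinal.mk (Arrow D) < α

/-- `α`-filteredness: every `α`-small diagram admits a cocone. -/
def IsAlphaFiltered (α : Cardinal.{u}) (D : Type w) [Category.{v} D] : Prop :=
  ∀ (S : Type u) [iS : SmallCategory S], AlphaSmall α S → ∀ F : S ⥤ D, Nonempty (Cocone F)

/-- `F : B ⥤ Set` is `α`-flat if `(−) ⋆ F` preserves `α`-small limits. -/
def AlphaFlat (α : Cardinal.{u}) {B : Type u} [SmallCategory B] (F : B ⥤ Type u) : Prop :=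
  ∀ (D : Type u) [iD : SmallCategory D], AlphaSmall α D →
    PreservesLimitsOfShape D (costarF F)

/-- An object `X` is `α`-presentable if its hom-functor preserves `α`-filtered colimits. -/
def AlphaPresentable (α : Cardinal.{u}) {A : Type w} [Category.{v} A] (X : A) : Prop :=
  ∀ (D : Type u) [iD : SmallCategory D], IsAlphaFiltered α D →
    PreservesColimitsOfShape D (coyoneda.obj (op X))

/-- A category is `α`-accessible if it has `α`-filtered (= `α`-flat) colimits and is
equivalent to the category of `α`-flat set-valued functors on some small category. -/
def AlphaAccessible (α : Cardinal.{u}) (A : Type w) [Category.{v} A] : Prop :=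
  (∀ (D : Type u) [iD : SmallCategory D], IsAlphaFiltered α D → HasColimitsOfShape D A) ∧
  ∃ B : Cat.{u, u}, Nonempty (A ≌ ObjectProperty.FullSubcategory (fun F : B ⥤ Type u => AlphaFlat α F))

/-- A functor preserves `α`-flat colimits (in the ordinary case, `α`-filtered colimits). -/
def PreservesAlphaFlatColimits (α : Cardinal.{u}) {A : Type w} [Category.{v} A]
    {K : Type w'} [Category.{v'} K] (F : A ⥤ K) : Prop :=
  ∀ (D : Type u) [iD : SmallCategory D], IsAlphaFiltered α D →
    PreservesColimitsOfShape D F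

/-- A functor is `α`-continuous: it preserves `α`-small limits. -/
def AlphaContinuous (α : Cardinal.{u}) {A : Type w} [Category.{v} A]
    {K : Type w'} [Category.{v'} K] (F : A ⥤ K) : Prop :=
  ∀ (D : Type u) [iD : SmallCategory D], AlphaSmall α D → PreservesLimitsOfShape D F

/-! ### Classes of limits -/

/-- A class of limit shapes. -/
def ShapeClass : Type (u + 1) :=
  ∀ (D : Type u), SmallCategory D → Prop

/-- A category has `Ψ`-limits. -/
def PsiComplete (Psi : ShapeClass.{u}) (A : Type w) [Category.{v} A] : Prop :=
  ∀ (D : Type u) [iD : SmallCategory D], Psi D iD → HasLimitsOfShape D A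

/-- A functor is `Ψ`-continuous. -/
def PsiContinuous (Psi : ShapeClass.{u}) {A : Type w} [Category.{v} A]
    {K : Type w'} [Category.{v'} K] (F : A ⥤ K) : Prop :=
  ∀ (D : Type u) [iD : SmallCategory D], Psi D iD → PreservesLimitsOfShape D F

/-! ### Colimit types -/

/-- A colimit type assigns to each weight a replete full subcategory of diagrams. -/
def ColimitType : Type (u + 1) :=
  ∀ (C : Type u) (iC : SmallCategory C), (Cᵒᵖ ⥤ Type u) → Set (C ⥤ Type u)

/-- `(M, H)` is a diagram of type `𝖢` in the functor category `[B, Set]`. -/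
def IsCDiagram (Ct : ColimitType.{u}) {C : Type u} [iC : SmallCategory C]
    (M : Cᵒᵖ ⥤ Type u) {B : Type w} [Category.{u} B] (H : C ⥤ (B ⥤ Type u)) : Prop :=
  ∀ b : B, H ⋙ (evaluation B (Type u)).obj b ∈ Ct C iC M

/-- A subcategory of a functor category is closed under colimits of type `𝖢`. -/
def ClosedUnderC (Ct : ColimitType.{u}) {B : Type w} [Category.{u} B]
    (S : Set (B ⥤ Type u)) : Prop :=
  ∀ (C : Type u) [iC : SmallCategory C] (M : Cᵒᵖ ⥤ Type u) (H : C ⥤ (B ⥤ Type u)),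
    IsCDiagram Ct M H → (∀ c : C, H.obj c ∈ S) → wcolim M H ∈ S

/-- The closure of a family of generators under colimits of type `𝖢` (and isomorphisms). -/
def CClosureIn (Ct : ColimitType.{u}) {B : Type w} [Category.{u} B]
    (gens : Set (B ⥤ Type u)) : Set (B ⥤ Type u) :=
  ⋂₀ {S | gens ⊆ S ∧ (∀ X Y : B ⥤ Type u, Nonempty (X ≅ Y) → X ∈ S → Y ∈ S) ∧
      ClosedUnderC Ct S}

/-- `𝖢A`: the closure of the representables under `𝖢`-colimits inside presheaves on `A`. -/
def CClosure (Ct : ColimitType.{u}) (A : Type w) [Category.{u} A] :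
    Set (Aᵒᵖ ⥤ Type u) :=
  CClosureIn Ct {X | ∃ a : A, Nonempty (X ≅ yoneda.obj a)}

/-- `𝖢(Aᵒᵖ)`: the closure of the corepresentables under `𝖢`-colimits in `[A, Set]`. -/
def CoCClosure (Ct : ColimitType.{u}) (A : Type w) [Category.{u} A] :
    Set (A ⥤ Type u) :=
  CClosureIn Ct {X | ∃ a : A, Nonempty (X ≅ coyoneda.obj (op a))}

/-- The one-step completion `𝖢₁B` of `B` under `𝖢`-colimits of representables. -/
def COneStep (Ct : ColimitType.{u}) (B : Type w) [Category.{u} B] :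
    Set (Bᵒᵖ ⥤ Type u) :=
  {X | (∃ b : B, Nonempty (X ≅ yoneda.obj b)) ∨
    ∃ (C : Cat.{u, u}) (M : (↑C)ᵒᵖ ⥤ Type u) (H : ↑C ⥤ (Bᵒᵖ ⥤ Type u)),
      IsCDiagram Ct M H ∧ (∀ c : ↑C, ∃ b : B, Nonempty (H.obj c ≅ yoneda.obj b)) ∧
      Nonempty (X ≅ wcolim M H)}

/-- The category `𝖢B`. -/
abbrev CCat (Ct : ColimitType.{u}) (B : Type w) [Category.{u} B] :=
  ObjectProperty.FullSubcategory (fun X => X ∈ CClosure Ct B)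

/-- The inclusion `B ⥤ 𝖢B` (corestricted Yoneda). -/
def yonedaC (Ct : ColimitType.{u}) (B : Type w) [Category.{u} B] : B ⥤ CCat Ct B :=
  ObjectProperty.lift _ yoneda (fun b S hS => hS.1 ⟨b, ⟨Iso.refl _⟩⟩)

/-- Compatibility of a colimit type with a class of limits. -/
def Compatible (Psi : ShapeClass.{u}) (Ct : ColimitType.{u}) : Prop :=
  ∀ (C : Type u) [iC : SmallCategory C] (M : Cᵒᵖ ⥤ Type u), (Ct C iC M).Nonempty →
    ∀ (D : Type u) [iD : SmallCategory D], Psi D iD →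
      ∀ S : D ⥤ (C ⥤ Type u), (∀ d : D, S.obj d ∈ Ct C iC M) →
        limit S ∈ Ct C iC M ∧
        Nonempty (IsLimit ((wcolimF M).mapCone (limit.cone S)))

/-- Condition (a): each `𝖢_M` is closed under `α`-flat (= `α`-filtered) colimits. -/
def ConditionA (α : Cardinal.{u}) (Ct : ColimitType.{u}) : Prop :=
  ∀ (C : Type u) [iC : SmallCategory C] (M : Cᵒᵖ ⥤ Type u)
    (D : Type u) [iD : SmallCategory D], IsAlphaFiltered α D →
    ∀ H : D ⥤ (C ⥤ Type u), (∀ d : D, H.obj d ∈ Ct C iC M) →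
      colimit H ∈ Ct C iC M

/-- `A(H−, a)` for `H : Cᵒᵖ ⥤ A`, as a covariant functor `C ⥤ Set`. -/
def homDiagram {C : Type u} [SmallCategory C] {A : Type w} [Category.{u} A]
    (H : Cᵒᵖ ⥤ A) (a : A) : C ⥤ Type u :=
  H.rightOp ⋙ yoneda.obj a

/-- Condition (b): every `Ψ`-continuous `α`-flat-colimit-preserving functor from an
`α`-accessible category with `Ψ`-limits to `Set` is a `𝖢`-colimit of representables
at `α`-presentable objects. -/
def ConditionB (α : Cardinal.{u}) (Psi : ShapeClass.{u}) (Ct : ColimitType.{u}) : Prop :=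
  ∀ (A : Type (u + 1)) [iA : Category.{u} A], AlphaAccessible α A → PsiComplete Psi A →
    ∀ F : A ⥤ Type u, PsiContinuous Psi F → PreservesAlphaFlatColimits α F →
      ∃ (C : Type u) (iC : SmallCategory C) (M : Cᵒᵖ ⥤ Type u) (H : Cᵒᵖ ⥤ A),
        (∀ c : Cᵒᵖ, AlphaPresentable α (H.obj c)) ∧
        (∀ a : A, homDiagram H a ∈ Ct C iC M) ∧
        Nonempty (F ≅ wcolim M (H.rightOp ⋙ coyoneda))

/-! ### 𝖢-virtual limits -/

/-- The presheaf `{M, Y∘H} = [C,Set](M, B(−, H−))`. -/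
@[simps] def virtLim {C : Type u} [SmallCategory C] {B : Type w} [Category.{u} B]
    (M : C ⥤ Type u) (H : C ⥤ B) : Bᵒᵖ ⥤ Type u where
  obj b := M ⟶ H ⋙ coyoneda.obj (op b.unop)
  map {b b'} f := TypeCat.ofHom fun τ => τ ≫ Functor.whiskerLeft H (coyoneda.map f.unop.op)

/-- An `α`-small covariant weight. -/
def AlphaSmallWeight (α : Cardinal.{u}) {C : Type u} [SmallCategory C]
    (M : C ⥤ Type u) : Prop :=
  Cardinal.mk (Arrow C) < α ∧ ∀ c : C, Cardinal.mk (M.obj c) < α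

/-- `B` is `𝖢`-virtually `α`-complete. -/
def CVirtuallyAlphaComplete (Ct : ColimitType.{u}) (α : Cardinal.{u})
    (B : Type w) [Category.{u} B] : Prop :=
  ∀ (C : Type u) [iC : SmallCategory C] (M : C ⥤ Type u) (H : C ⥤ B),
    AlphaSmallWeight α M → virtLim M H ∈ CClosure Ct B

/-- `F : B ⥤ Set` is `𝖢`-virtually `α`-continuous. -/
def CVirtuallyAlphaContinuous (Ct : ColimitType.{u}) (α : Cardinal.{u})
    {B : Type u} [SmallCategory B] (F : B ⥤ Type u) : Prop :=
  ∀ (C : Type u) [iC : SmallCategory C] (M : C ⥤ Type u) (H : C ⥤ B),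
    AlphaSmallWeight α M → virtLim M H ∈ CClosure Ct B →
      Nonempty ((costarF F).obj (virtLim M H) ≃ (M ⟶ H ⋙ F))

/-! ### Diagrams of type 𝖢 in `𝖢B`, 𝖢-cocontinuity, 𝖢-presentability -/

/-- A diagram of type `𝖢` in the category `𝖢B`. -/
def IsCDiagramC (Ct : ColimitType.{u}) {C : Type u} [iC : SmallCategory C]
    (M : Cᵒᵖ ⥤ Type u) {B : Type w} [Category.{u} B] (H : C ⥤ CCat Ct B) : Prop :=
  IsCDiagram Ct M (H ⋙ ObjectProperty.ι _)

/-- A set-valued functor on `𝖢B` is `𝖢`-cocontinuous: it preserves diagrams of type `𝖢`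
as well as their colimits. -/
def CCocontinuousTo (Ct : ColimitType.{u}) {B : Type w} [Category.{u} B]
    (F : CCat Ct B ⥤ Type u) : Prop :=
  ∀ (C : Type u) [iC : SmallCategory C] (M : Cᵒᵖ ⥤ Type u) (H : C ⥤ CCat Ct B),
    IsCDiagramC Ct M H →
      (H ⋙ F) ∈ Ct C iC M ∧
      ∀ c : Cocone (elemDiagram M H), IsColimit c → Nonempty (IsColimit (F.mapCocone c))

/-- A set-valued functor on `𝖢B` preserves colimits of type `𝖢`
(but not necessarily the diagrams themselves). -/
def CColimPreserving (Ct : ColimitType.{u}) {B : Type w} [Category.{u} B]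
    (F : CCat Ct B ⥤ Type u) : Prop :=
  ∀ (C : Type u) [iC : SmallCategory C] (M : Cᵒᵖ ⥤ Type u) (H : C ⥤ CCat Ct B),
    IsCDiagramC Ct M H →
      ∀ c : Cocone (elemDiagram M H), IsColimit c → Nonempty (IsColimit (F.mapCocone c))

/-! ### Regularity, pseudo equivalence relations, exactness -/

/-- A regular projective object. -/
def RegProjective {E : Type w} [Category.{v} E] (P : E) : Prop :=
  ∀ ⦃X Y : E⦄ (e : X ⟶ Y), Nonempty (RegularEpi e) → ∀ g : P ⟶ Y, ∃ f : P ⟶ X, f ≫ e = g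

/-- A pseudo equivalence relation: a pair factoring as a regular epi followed by the
kernel pair of a regular epi. -/
def IsPseudoEqRel {E : Type w} [Category.{v} E] {R P : E} (f g : R ⟶ P) : Prop :=
  ∃ (S : E) (q : R ⟶ S) (h k : S ⟶ P), Nonempty (RegularEpi q) ∧ f = q ≫ h ∧ g = q ≫ k ∧
    ∃ (Z : E) (m : P ⟶ Z), Nonempty (RegularEpi m) ∧ IsKernelPair m h k

/-- `𝖱`-presentable objects: the hom-functor preserves coequalizers of
pseudo equivalence relations. -/
def RPresentable {E : Type w} [Category.{v} E] (X : E) : Prop :=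
  ∀ {R P : E} (f g : R ⟶ P), IsPseudoEqRel f g →
    PreservesColimit (parallelPair f g) (coyoneda.obj (op X))

/-- Enough regular projectives. -/
def EnoughRegProjectives (E : Type w) [Category.{v} E] : Prop :=
  ∀ X : E, ∃ (P : E) (p : P ⟶ X), RegProjective P ∧ Nonempty (RegularEpi p)

/-- An equivalence relation: a jointly monic, reflexive, symmetric, transitive pair. -/
def IsEquivRelPair {E : Type w} [Category.{v} E] [HasFiniteLimits E]
    {R X : E} (f g : R ⟶ X) : Prop :=
  Mono (prod.lift f g) ∧
  (∃ r : X ⟶ R, r ≫ f = 𝟙 X ∧ r ≫ g = 𝟙 X) ∧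
  (∃ s : R ⟶ R, s ≫ f = g ∧ s ≫ g = f) ∧
  (∃ t : pullback g f ⟶ R,
    t ≫ f = pullback.fst g f ≫ f ∧ t ≫ g = pullback.snd g f ≫ g)

/-- Barr-exactness (for a finitely complete category with coequalizers of kernel pairs):
regular epis are stable under pullback and every equivalence relation is a kernel pair. -/
def BarrExact (E : Type w) [Category.{v} E] [HasFiniteLimits E] : Prop :=
  (∀ {X Y Z : E} (e : X ⟶ Y) (g : Z ⟶ Y), Nonempty (RegularEpi e) →
    Nonempty (RegularEpi (pullback.snd e g))) ∧
  (∀ {R X : E} (f g : R ⟶ X), IsEquivRelPair f g →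
    ∃ (Z : E) (m : X ⟶ Z), IsKernelPair m f g)

/-- The closure of the representables under coequalizers of pseudo equivalence relations. -/
def RClosure (B : Type w) [Category.{u} B] : Set (Bᵒᵖ ⥤ Type u) :=
  ⋂₀ {S | (∀ b : B, yoneda.obj b ∈ S) ∧
    (∀ X Y : Bᵒᵖ ⥤ Type u, Nonempty (X ≅ Y) → X ∈ S → Y ∈ S) ∧
    ∀ (R P : Bᵒᵖ ⥤ Type u) (f g : R ⟶ P), IsPseudoEqRel f g → R ∈ S → P ∈ S →
      colimit (parallelPair f g) ∈ S}

/-- The restricted Yoneda embedding into presheaves on the regular projectives. -/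
def restrictedYoneda (E : Type u) [SmallCategory E] :
    E ⥤ ((ObjectProperty.FullSubcategory (RegProjective (E := E)))ᵒᵖ ⥤ Type u) :=
  yoneda ⋙ (Functor.whiskeringLeft _ _ _).obj (ObjectProperty.ι _).op

/-! ### Free groupoid actions -/

/-- The equalizer of `f` and `g` exists and is an initial object. -/
def HasInitialEqualizer {E : Type w} [Category.{v} E] {X Y : E} (f g : X ⟶ Y) : Prop :=
  ∃ c : Fork f g, Nonempty (IsLimit c) ∧ Nonempty (IsInitial c.pt)

/-- A free groupoid action. -/
def FreeAction {G : Type w} [Groupoid.{v} G] {E : Type w'} [Category.{v'} E]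
    (H : G ⥤ E) : Prop :=
  ∀ ⦃x y : G⦄ (g h : x ⟶ y), g ≠ h → HasInitialEqualizer (H.map g) (H.map h)

/-- A weakly-free groupoid action. -/
def WeaklyFreeAction {G : Type w} [Groupoid.{v} G] {E : Type w'} [Category.{v'} E]
    (H : G ⥤ E) : Prop :=
  ∀ ⦃x y : G⦄ (g h : x ⟶ y), H.map g ≠ H.map h → HasInitialEqualizer (H.map g) (H.map h)

/-- A weakly-free action by `ℤ`: an automorphism all of whose non-identity powers
are fixed-point-free. -/
def WeaklyFreeAut {E : Type w} [Category.{v} E] {X : E} (f : Aut X) : Prop :=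
  ∀ n : ℤ, (f ^ n).hom ≠ 𝟙 X → HasInitialEqualizer (f ^ n).hom (𝟙 X)

/-! ### Topos-theoretic notions -/

/-- Lex cocontinuous functors. -/
def LexCocontPred.{u₀, w₀, v₀, w₁, v₁} {A : Type w₀} [Category.{v₀} A] {K : Type w₁} [Category.{v₁} K]
    (F : A ⥤ K) : Prop :=
  PreservesFiniteLimits F ∧
  ∀ (D : Type u₀) [iD : SmallCategory D], PreservesColimitsOfShape D F

/-- Finitary functors: those preserving (small) filtered colimits. -/
def FinitaryPred.{u₀, w₀, v₀, w₁, v₁} {A : Type w₀} [Category.{v₀} A] {K : Type w₁} [Category.{v₁} K]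
    (F : A ⥤ K) : Prop :=
  ∀ (D : Type u₀) [iD : SmallCategory D] [IsFiltered D], PreservesColimitsOfShape D F

/-- Possessing all small filtered colimits. -/
def HasFilteredColimitsP.{u₀, w₀, v₀} (A : Type w₀) [Category.{v₀} A] : Prop :=
  ∀ (D : Type u₀) [iD : SmallCategory D] [IsFiltered D], HasColimitsOfShape D A

/-- A left exact localization of a presheaf category. -/
def IsLexLocalization.{u₀, w₀, v₀} (X : Type w₀) [Category.{v₀} X] : Prop :=
  ∃ (C : Cat.{u₀, u₀}) (J : X ⥤ ((↑C)ᵒᵖ ⥤ Type u₀)) (L : ((↑C)ᵒᵖ ⥤ Type u₀) ⥤ X),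
    Nonempty (L ⊣ J) ∧ J.Full ∧ J.Faithful ∧ PreservesFiniteLimits L

/-- A Grothendieck topos: an accessible left exact localization of a presheaf category. -/
def IsGrothendieckTopos.{u₀, w₀, v₀} (X : Type w₀) [Category.{v₀} X] : Prop :=
  ∃ (C : Cat.{u₀, u₀}) (J : X ⥤ ((↑C)ᵒᵖ ⥤ Type u₀)) (L : ((↑C)ᵒᵖ ⥤ Type u₀) ⥤ X),
    Nonempty (L ⊣ J) ∧ J.Full ∧ J.Faithful ∧ PreservesFiniteLimits L ∧
    ∃ κ : Cardinal.{u₀}, PreservesAlphaFlatColimits κ J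

/-!
Maps out of a regular projective `P` lift along regular epis, so `E(P, -)` sends a regular
epi `π : X ⟶ W` to a surjection. If moreover every pair `x, y : P ⟶ X` identified by `π`
factors through `(f, g) : R ⇉ X`, the fibres of that surjection are exactly the pairs
`(z ≫ f, z ≫ g)`, so `E(P, -)` turns `R ⇉ X ⟶ W` into a coequalizer of sets. Kernel pairs
have this property, and so does `Q ⟶ ker p ⇉ P` for projective covers `p : P ⟶ X` and
`Q ⟶ ker p`; evaluating at every projective gives the colimit statements. For fullness, a map
`E(-, P) ⟶ E(-, Y)` of presheaves on projectives is determined by the image of `𝟙 P`, so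
`E(-, p) ≫ τ = E(-, f₀)`, and `f₀` descends along `p`, the coequalizer of its kernel pair.
-/

noncomputable def Types.isColimitCoforkOfSurjective {R X : Type u} {f g : R ⟶ X}
    (c : Cofork f g) (hsurj : Function.Surjective c.π)
    (hfib : ∀ x y, c.π x = c.π y → ∃ r, f r = x ∧ g r = y) : IsColimit c := by
  have hdesc : ∀ (s : Cofork f g) (x y : X), c.π x = c.π y → s.π x = s.π y := by
    intro s x y hxy
    obtain ⟨r, rfl, rfl⟩ := hfib x y hxy
    exact ConcreteCategory.congr_hom s.condition r
  refine Cofork.IsColimit.mk c (fun s => TypeCat.ofHom fun w => s.π (Function.surjInv hsurj w))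
    (fun s => ?_) (fun s m hm => ?_)
  · ext x
    exact hdesc s _ _ (Function.surjInv_eq hsurj _)
  · ext w
    obtain ⟨x, rfl⟩ := hsurj w
    exact (ConcreteCategory.congr_hom hm x).trans (hdesc s _ _ (Function.surjInv_eq hsurj _).symm)

section

variable {E : Type w} [Category.{v} E]

def IsWeakKernelPairOnRegProjectives {R X W : E} (π : X ⟶ W) (f g : R ⟶ X) : Prop :=
  ∀ ⦃P : E⦄, RegProjective P → ∀ x y : P ⟶ X, x ≫ π = y ≫ π →
    ∃ z : P ⟶ R, z ≫ f = x ∧ z ≫ g = y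

lemma isWeakKernelPairOnRegProjectives_of_isKernelPair {R X W Z : E} {m : X ⟶ Z} {f g : R ⟶ X}
    (kp : IsKernelPair m f g) {π : X ⟶ W} {d : W ⟶ Z} (hd : π ≫ d = m) :
    IsWeakKernelPairOnRegProjectives π f g := by
  intro P _ x y hxy
  obtain ⟨z, hzf, hzg⟩ := kp.lift' x y (by rw [← hd, reassoc_of% hxy])
  exact ⟨z, hzf, hzg⟩

lemma IsWeakKernelPairOnRegProjectives.precomp {R R' X W : E} {π : X ⟶ W} {f g : R ⟶ X}
    (h : IsWeakKernelPairOnRegProjectives π f g) (q : R' ⟶ R) (hq : Nonempty (RegularEpi q)) :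
    IsWeakKernelPairOnRegProjectives π (q ≫ f) (q ≫ g) := by
  intro P hP x y hxy
  obtain ⟨z, rfl, rfl⟩ := h hP x y hxy
  obtain ⟨z', rfl⟩ := hP q hq z
  exact ⟨z', by simp, by simp⟩

noncomputable def isColimitCoyonedaMapCoforkOfRegProjective {R X W P : E} {f g : R ⟶ X}
    {π : X ⟶ W} (w : f ≫ π = g ≫ π) (hπ : Nonempty (RegularEpi π))
    (h : IsWeakKernelPairOnRegProjectives π f g) (hP : RegProjective P) :
    IsColimit ((coyoneda.obj (op P)).mapCocone (Cofork.ofπ π w)) :=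
  (isColimitMapCoconeCoforkEquiv _ w).symm <|
    Types.isColimitCoforkOfSurjective _ (hP π hπ) (h hP)

lemma IsPseudoEqRel.conj {A B A' B' : E} {f g : A ⟶ B} (h : IsPseudoEqRel f g)
    (eA : A ≅ A') (eB : B ≅ B') :
    IsPseudoEqRel (eA.inv ≫ f ≫ eB.hom) (eA.inv ≫ g ≫ eB.hom) := by
  obtain ⟨S, q, a, b, ⟨hq⟩, rfl, rfl, Z, m, ⟨hm⟩, kp⟩ := h
  exact ⟨S, eA.inv ≫ q, a ≫ eB.hom, b ≫ eB.hom,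
    ⟨RegularEpi.ofArrowIso (Arrow.isoMk eA (Iso.refl _) (by simp)) hq⟩, by simp, by simp,
    Z, eB.inv ≫ m, ⟨RegularEpi.ofArrowIso (Arrow.isoMk eB (Iso.refl _) (by simp)) hm⟩,
    kp.of_iso (Iso.refl _) eB eB (Iso.refl _) (by simp) (by simp) (by simp) (by simp)⟩

lemma exists_pseudoEqRel_presentation [HasPullbacks E] (hep : EnoughRegProjectives E) (X : E) :
    ∃ (P Q : E) (hP : RegProjective P) (hQ : RegProjective Q) (f g : P ⟶ Q),
      IsPseudoEqRel f g ∧ ∃ (π : Q ⟶ X) (w : f ≫ π = g ≫ π),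
        Nonempty (IsColimit (Cofork.ofπ π w)) ∧ Nonempty (RegularEpi π) ∧
        IsWeakKernelPairOnRegProjectives π f g := by
  obtain ⟨Q, p, hQ, ⟨hp⟩⟩ := hep X
  have kp := IsKernelPair.of_hasPullback p
  obtain ⟨P, q, hP, ⟨hq⟩⟩ := hep (pullback p p)
  have := hq.epi
  have w : (q ≫ pullback.fst p p) ≫ p = (q ≫ pullback.snd p p) ≫ p := by
    simp only [Category.assoc, kp.w]
  exact ⟨P, Q, hP, hQ, _, _, ⟨_, q, _, _, ⟨hq⟩, rfl, rfl, X, p, ⟨hp⟩, kp⟩, p, w,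
    ⟨isCoequalizerEpiComp (kp.toCoequalizer hp) q⟩, ⟨hp⟩,
    (isWeakKernelPairOnRegProjectives_of_isKernelPair kp (Category.comp_id p)).precomp q ⟨hq⟩⟩

end

section RestrictedYoneda

variable {E : Type u} [SmallCategory E]

instance : PreservesLimits (restrictedYoneda E) := by
  unfold restrictedYoneda
  infer_instance

noncomputable def isColimitRestrictedYonedaMapCofork {R X W : E} {f g : R ⟶ X} {π : X ⟶ W}
    (w : f ≫ π = g ≫ π) (hπ : Nonempty (RegularEpi π))
    (h : IsWeakKernelPairOnRegProjectives π f g) :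
    IsColimit ((restrictedYoneda E).mapCocone (Cofork.ofπ π w)) :=
  evaluationJointlyReflectsColimits _ fun P =>
    isColimitCoyonedaMapCoforkOfRegProjective w hπ h P.unop.property

lemma preservesColimit_restrictedYoneda_of_isKernelPair {R X Z : E} {m : X ⟶ Z} {f g : R ⟶ X}
    (kp : IsKernelPair m f g) : PreservesColimit (parallelPair f g) (restrictedYoneda E) := by
  refine ⟨fun {c : Cofork f g} hc => ⟨?_⟩⟩
  have hc' : IsColimit (Cofork.ofπ c.π c.condition) := hc.ofIsoColimit c.isoCoforkOfπ
  refine IsColimit.ofIsoColimit (isColimitRestrictedYonedaMapCofork c.condition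
    ⟨Cofork.IsColimit.regularEpi hc⟩ ?_)
    ((Cocone.functoriality _ _).mapIso c.isoCoforkOfπ.symm)
  exact isWeakKernelPairOnRegProjectives_of_isKernelPair kp
    (hc'.fac (Cofork.ofπ m kp.w) .one)

noncomputable def regularEpiRestrictedYonedaMap {X Y : E} (u : X ⟶ Y) [HasPullback u u]
    (hu : RegularEpi u) : RegularEpi ((restrictedYoneda E).map u) :=
  have kp := IsKernelPair.of_hasPullback u
  Cofork.IsColimit.regularEpi <| isColimitMapCoconeCoforkEquiv _ kp.w <|
    isColimitRestrictedYonedaMapCofork kp.w ⟨hu⟩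
      (isWeakKernelPairOnRegProjectives_of_isKernelPair kp (Category.comp_id u))

lemma restrictedYoneda_faithful (hep : EnoughRegProjectives E) :
    (restrictedYoneda E).Faithful where
  map_injective {X Y} a b hab := by
    obtain ⟨P, p, hP, ⟨hp⟩⟩ := hep X
    have := hp.epi
    exact (cancel_epi p).1 (ConcreteCategory.congr_hom
      (NatTrans.congr_app hab (op ⟨P, hP⟩)) p)

lemma eq_restrictedYoneda_map_of_regProjective {P Y : E} (hP : RegProjective P)
    (σ : (restrictedYoneda E).obj P ⟶ (restrictedYoneda E).obj Y) :
    σ = (restrictedYoneda E).map (σ.app (op ⟨P, hP⟩) (𝟙 P)) := by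
  ext R x
  have := ConcreteCategory.congr_hom
    (σ.naturality (Quiver.Hom.op (ObjectProperty.homMk x : R.unop ⟶ ⟨P, hP⟩))) (𝟙 P)
  nth_rewrite 1 [← Category.comp_id x]
  exact this

lemma restrictedYoneda_full [HasPullbacks E] (hep : EnoughRegProjectives E) :
    (restrictedYoneda E).Full where
  map_surjective {X Y} τ := by
    have := restrictedYoneda_faithful hep
    obtain ⟨P, p, hP, ⟨hp⟩⟩ := hep X
    have kp := IsKernelPair.of_hasPullback p
    have := (regularEpiRestrictedYonedaMap p hp).epi
    set f₀ : P ⟶ Y := ((restrictedYoneda E).map p ≫ τ).app (op ⟨P, hP⟩) (𝟙 P)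
    have hf₀ : (restrictedYoneda E).map p ≫ τ = (restrictedYoneda E).map f₀ :=
      eq_restrictedYoneda_map_of_regProjective hP _
    have hw : pullback.fst p p ≫ f₀ = pullback.snd p p ≫ f₀ :=
      (restrictedYoneda E).map_injective (by
        simp only [Functor.map_comp, ← hf₀, ← Functor.map_comp_assoc, kp.w])
    refine ⟨(kp.toCoequalizer hp).desc (Cofork.ofπ f₀ hw), ?_⟩
    rw [← cancel_epi ((restrictedYoneda E).map p), hf₀, ← Functor.map_comp]
    exact congrArg _ ((kp.toCoequalizer hp).fac _ .one)

lemma IsPseudoEqRel.map_restrictedYoneda [HasPullbacks E] {R P : E} {f g : R ⟶ P}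
    (h : IsPseudoEqRel f g) :
    IsPseudoEqRel ((restrictedYoneda E).map f) ((restrictedYoneda E).map g) := by
  obtain ⟨S, q, a, b, ⟨hq⟩, rfl, rfl, Z, m, ⟨hm⟩, kp⟩ := h
  exact ⟨_, _, _, _, ⟨regularEpiRestrictedYonedaMap q hq⟩, Functor.map_comp _ _ _,
    Functor.map_comp _ _ _, _, _, ⟨regularEpiRestrictedYonedaMap m hm⟩, kp.map _⟩

def restrictedYonedaObjIso (P : ObjectProperty.FullSubcategory (RegProjective (E := E))) :
    (restrictedYoneda E).obj P.obj ≅ yoneda.obj P :=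
  NatIso.ofComponents (fun _ =>
    { hom := TypeCat.ofHom ObjectProperty.homMk
      inv := TypeCat.ofHom fun x => x.hom }) (fun _ => rfl)

lemma exists_restrictedYoneda_pseudoEqRel_presentation [HasPullbacks E]
    (hep : EnoughRegProjectives E) (X : E) :
    ∃ (P Q : ObjectProperty.FullSubcategory (RegProjective (E := E)))
      (f g : yoneda.obj P ⟶ yoneda.obj Q), IsPseudoEqRel f g ∧
      ∃ (π : yoneda.obj Q ⟶ (restrictedYoneda E).obj X) (w : f ≫ π = g ≫ π),
        Nonempty (IsColimit (Cofork.ofπ π w)) := by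
  obtain ⟨P, Q, hP, hQ, f, g, hfg, π, w, -, ⟨hπ⟩, hweak⟩ :=
    exists_pseudoEqRel_presentation hep X
  have hc :=
    isColimitMapCoconeCoforkEquiv _ w (isColimitRestrictedYonedaMapCofork w ⟨hπ⟩ hweak)
  let eP := restrictedYonedaObjIso ⟨P, hP⟩
  let eQ := restrictedYonedaObjIso ⟨Q, hQ⟩
  refine ⟨⟨P, hP⟩, ⟨Q, hQ⟩, _, _, hfg.map_restrictedYoneda.conj eP eQ,
    eQ.inv ≫ (restrictedYoneda E).map π,
    by simp only [Category.assoc, Iso.hom_inv_id_assoc, ← Functor.map_comp, w], ⟨?_⟩⟩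
  exact Cofork.isColimitOfIsos _ hc _ eP eQ (Iso.refl _) (by simp) (by simp) (by simp)

end RestrictedYoneda

theorem statement19_general (E : Type u) [SmallCategory E] [HasFiniteLimits E]
    (hep : EnoughRegProjectives E) :
    (restrictedYoneda E).Full ∧ (restrictedYoneda E).Faithful ∧
    PreservesFiniteLimits (restrictedYoneda E) ∧
    (∀ {R X : E} (f g : R ⟶ X), (∃ (Z : E) (m : X ⟶ Z), IsKernelPair m f g) →
      PreservesColimit (parallelPair f g) (restrictedYoneda E)) ∧
    (∀ X : E, ∃ (P Q : ObjectProperty.FullSubcategory (RegProjective (E := E)))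
        (f g : yoneda.obj P ⟶ yoneda.obj Q), IsPseudoEqRel f g ∧
        ∃ (π : yoneda.obj Q ⟶ (restrictedYoneda E).obj X) (w : f ≫ π = g ≫ π),
          Nonempty (IsColimit (Cofork.ofπ π w))) ∧
    (∀ X : E, ∃ (P Q : E) (hP : RegProjective P) (hQ : RegProjective Q)
        (f g : P ⟶ Q), IsPseudoEqRel f g ∧
        ∃ (π : Q ⟶ X) (w : f ≫ π = g ≫ π), Nonempty (IsColimit (Cofork.ofπ π w))) := by
  refine ⟨restrictedYoneda_full hep, restrictedYoneda_faithful hep, inferInstance,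
    fun f g ⟨_, _, kp⟩ => preservesColimit_restrictedYoneda_of_isKernelPair kp,
    exists_restrictedYoneda_pseudoEqRel_presentation hep, fun X => ?_⟩
  obtain ⟨P, Q, hP, hQ, f, g, hfg, π, w, hc, -⟩ := exists_pseudoEqRel_presentation hep X
  exact ⟨P, Q, hP, hQ, f, g, hfg, π, w, hc⟩

/-- for a small regular category `E` with enough regular projectives, the
restricted Yoneda functor `E ⥤ [E_Pᵒᵖ, Set]` is fully faithful, preserves finite limits
and coequalizers of kernel pairs, and lands in the presheaves that are coequalizers of
pseudo equivalence relations of representables; in particular every object of `E` is a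
coequalizer of a pseudo equivalence relation of projectives. -/
theorem statement19 (E : Type u) [SmallCategory E] [HasFiniteLimits E]
    (hco : ∀ {R X : E} (f g : R ⟶ X),
      (∃ (Z : E) (m : X ⟶ Z), IsKernelPair m f g) → HasCoequalizer f g)
    (hstab : ∀ {X Y Z : E} (e : X ⟶ Y) (g : Z ⟶ Y), Nonempty (RegularEpi e) →
      Nonempty (RegularEpi (pullback.snd e g)))
    (hep : EnoughRegProjectives E) :
    (restrictedYoneda E).Full ∧ (restrictedYoneda E).Faithful ∧
    PreservesFiniteLimits (restrictedYoneda E) ∧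
    (∀ {R X : E} (f g : R ⟶ X), (∃ (Z : E) (m : X ⟶ Z), IsKernelPair m f g) →
      PreservesColimit (parallelPair f g) (restrictedYoneda E)) ∧
    (∀ X : E, ∃ (P Q : ObjectProperty.FullSubcategory (RegProjective (E := E)))
        (f g : yoneda.obj P ⟶ yoneda.obj Q), IsPseudoEqRel f g ∧
        ∃ (π : yoneda.obj Q ⟶ (restrictedYoneda E).obj X) (w : f ≫ π = g ≫ π),
          Nonempty (IsColimit (Cofork.ofπ π w))) ∧
    (∀ X : E, ∃ (P Q : E) (hP : RegProjective P) (hQ : RegProjective Q)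
        (f g : P ⟶ Q), IsPseudoEqRel f g ∧
        ∃ (π : Q ⟶ X) (w : f ≫ π = g ≫ π), Nonempty (IsColimit (Cofork.ofπ π w))) :=
  statement19_general E hep

end Paper
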